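/- Let α be a peak composition of n and T a standard Young composition tableau of shape α. Then T satisfies the condition that for every 1 ≤ k ≤ n the boxes with entries at most k form the diagram of a peak composition, if and only if the entries in the second column of T increase from bottom to top. -/

import Mathlib

/-- A composition: a list of positive integers. -/
def IsComposition (α : List ℕ) : Prop := ∀ x ∈ α, 0 < x

/-- A peak composition: all parts except possibly the last exceed 1. -/
def IsPeakComposition (α : List ℕ) : Prop :=
  IsComposition α ∧ ∀ i, i + 1 < α.length → 1 < α.getD i 0

/-- A strict partition: a strictly decreasing list of positive integers. -/
def IsStrictPartition (l : List ℕ) : Prop :=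
  (∀ x ∈ l, 0 < x) ∧ l.Chain' (· > ·)

/-- Box b = (column, row) (both indexed from 1) belongs to the left-justified diagram
of the composition α (row i has α_i boxes; rows numbered from bottom). -/
def InCompDiag (α : List ℕ) (b : ℕ × ℕ) : Prop :=
  1 ≤ b.2 ∧ b.2 ≤ α.length ∧ 1 ≤ b.1 ∧ b.1 ≤ α.getD (b.2 - 1) 0

/-- Box b = (column, row) belongs to the shifted diagram of l: row i is shifted i-1
units rightwards. -/
def InShiftedDiag (l : List ℕ) (b : ℕ × ℕ) : Prop :=
  1 ≤ b.2 ∧ b.2 ≤ l.length ∧ b.2 ≤ b.1 ∧ b.1 < b.2 + l.getD (b.2 - 1) 0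

/-- A standard filling of the diagram D with n boxes: a bijective assignment of
1, ..., n to the boxes of D. -/
def IsStdFilling (D : ℕ × ℕ → Prop) (n : ℕ) (T : ℕ × ℕ → ℕ) : Prop :=
  (∀ b, D b → 1 ≤ T b ∧ T b ≤ n) ∧
  (∀ k, 1 ≤ k → k ≤ n → ∃ b, D b ∧ T b = k) ∧
  (∀ b b', D b → D b' → T b = T b' → b = b')

/-- A standard Young composition tableau of shape α: rows increase left to right,
the first column increases bottom to top, and the triple condition (SYCT3) holds. -/
def IsSYCT (α : List ℕ) (n : ℕ) (T : ℕ × ℕ → ℕ) : Prop :=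
  IsStdFilling (InCompDiag α) n T ∧
  (∀ c c' r, c < c' → InCompDiag α (c, r) → InCompDiag α (c', r) → T (c, r) < T (c', r)) ∧
  (∀ r r', r < r' → InCompDiag α (1, r) → InCompDiag α (1, r') → T (1, r) < T (1, r')) ∧
  (∀ c r r', r' < r → InCompDiag α (c, r) → InCompDiag α (c + 1, r') →
      T (c, r) < T (c + 1, r') →
      InCompDiag α (c + 1, r) ∧ T (c + 1, r) < T (c + 1, r'))

/-- For every 1 ≤ k ≤ n, the boxes of the diagram of α with entries at most k form the
diagram of a peak composition. -/
def PrefixesArePeak (α : List ℕ) (n : ℕ) (T : ℕ × ℕ → ℕ) : Prop :=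
  ∀ k, 1 ≤ k → k ≤ n → ∃ β : List ℕ, IsPeakComposition β ∧
    ∀ b, (InCompDiag α b ∧ T b ≤ k) ↔ InCompDiag β b

/-- A standard peak Young composition tableau. -/
def IsSPYCT (α : List ℕ) (n : ℕ) (T : ℕ × ℕ → ℕ) : Prop :=
  IsSYCT α n T ∧ PrefixesArePeak α n T

/-- A standard peak composition tableau (SPCT1, SPCT2, SPCT3). -/
def IsSPCT (α : List ℕ) (n : ℕ) (T : ℕ × ℕ → ℕ) : Prop :=
  IsStdFilling (InCompDiag α) n T ∧
  (∀ c c' r, c < c' → InCompDiag α (c, r) → InCompDiag α (c', r) → T (c, r) < T (c', r)) ∧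
  (∀ r r', r < r' → InCompDiag α (1, r) → InCompDiag α (1, r') → T (1, r) < T (1, r')) ∧
  PrefixesArePeak α n T

/-- A standard shifted tableau: rows increase left to right and columns increase
bottom to top. -/
def IsSShT (l : List ℕ) (n : ℕ) (T : ℕ × ℕ → ℕ) : Prop :=
  IsStdFilling (InShiftedDiag l) n T ∧
  (∀ c c' r, c < c' → InShiftedDiag l (c, r) → InShiftedDiag l (c', r) →
      T (c, r) < T (c', r)) ∧
  (∀ c r r', r < r' → InShiftedDiag l (c, r) → InShiftedDiag l (c, r') →
      T (c, r) < T (c, r'))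

/-- Rectification: shift each box of row r by r-1 units leftwards. -/
def rect (S : ℕ × ℕ → ℕ) : ℕ × ℕ → ℕ := fun b => S (b.1 + b.2 - 1, b.2)

/-- The filling obtained by exchanging the entries i and i+1. -/
def swapFill (T : ℕ × ℕ → ℕ) (i : ℕ) : ℕ × ℕ → ℕ :=
  fun b => if T b = i then i + 1 else if T b = i + 1 then i else T b

/-- i is a descent of a filling of the diagram of α (for the Young composition tableau
convention): i+1 lies in a column weakly left of the column of i. -/
def IsDes (α : List ℕ) (T : ℕ × ℕ → ℕ) (i : ℕ) : Prop :=
  ∃ b b', InCompDiag α b ∧ InCompDiag α b' ∧ T b = i ∧ T b' = i + 1 ∧ b'.1 ≤ b.1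


/-! If every prefix is a peak diagram, take the prefix ending at `T (1, r')`: its row `r < r'`
is not its last, so has a second box, whence `T (2, r) ≤ T (1, r') < T (2, r')`.
Conversely, monotonicity along rows and the first column makes every prefix a composition
diagram; it is peak because the triple condition together with the increasing second column
gives `T (2, r) < T (1, r')` for `r < r'`. -/

def RowIncreasing (α : List ℕ) (T : ℕ × ℕ → ℕ) : Prop :=
  ∀ c c' r, c < c' → InCompDiag α (c, r) → InCompDiag α (c', r) → T (c, r) < T (c', r)

def ColumnIncreasing (α : List ℕ) (T : ℕ × ℕ → ℕ) (c : ℕ) : Prop :=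
  ∀ r r', r < r' → InCompDiag α (c, r) → InCompDiag α (c, r') → T (c, r) < T (c, r')

theorem IsComposition.inCompDiag_one {α : List ℕ} (hα : IsComposition α) {r : ℕ}
    (h1 : 1 ≤ r) (hr : r ≤ α.length) : InCompDiag α (1, r) := by
  refine ⟨h1, hr, le_rfl, ?_⟩
  rw [List.getD_eq_getElem _ _ (by simp only; omega)]
  exact hα _ (List.getElem_mem _)

theorem IsPeakComposition.inCompDiag_two {β : List ℕ} (hβ : IsPeakComposition β)
    {c r r' : ℕ} (hr : 1 ≤ r) (hrr' : r < r') (h : InCompDiag β (c, r')) :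
    InCompDiag β (2, r) := by
  have hlen : r' ≤ β.length := h.2.1
  exact ⟨hr, by omega, one_le_two, hβ.2 (r - 1) (by omega)⟩

theorem IsComposition.isPeakComposition {β : List ℕ} (hβ : IsComposition β)
    (h : ∀ r, InCompDiag β (1, r + 2) → InCompDiag β (2, r + 1)) :
    IsPeakComposition β :=
  ⟨hβ, fun i hi => (h i (hβ.inCompDiag_one (by omega) hi)).2.2.2⟩

theorem exists_isComposition_inCompDiag_iff {α : List ℕ} {S : ℕ × ℕ → Prop}
    (hsub : ∀ b, S b → InCompDiag α b)
    (hrow : ∀ c c' r, 1 ≤ c' → c' ≤ c → S (c, r) → S (c', r))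
    (hcol : ∀ r r', 1 ≤ r → r ≤ r' → S (1, r') → S (1, r)) :
    ∃ β, IsComposition β ∧ ∀ b, S b ↔ InCompDiag β b := by
  classical
  set g : ℕ → ℕ := fun r => Nat.findGreatest (fun c => S (c, r)) (α.getD (r - 1) 0)
  set m := Nat.findGreatest (fun r => S (1, r)) α.length
  have le_g : ∀ c r, S (c, r) → c ≤ g r := fun c r h =>
    Nat.le_findGreatest (hsub _ h).2.2.2 h
  have le_m : ∀ r, S (1, r) → r ≤ m := fun r h => Nat.le_findGreatest (hsub _ h).2.1 h
  have S_one : ∀ r, 1 ≤ r → r ≤ m → S (1, r) := fun r h1 hrm =>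
    hcol r m h1 hrm (Nat.findGreatest_of_ne_zero (m := m) rfl (by omega))
  have S_iff : ∀ c r, S (c, r) ↔ 1 ≤ r ∧ r ≤ m ∧ 1 ≤ c ∧ c ≤ g r := by
    intro c r
    constructor
    · intro h
      have h1 := (hsub _ h).1
      have hc := (hsub _ h).2.2.1
      exact ⟨h1, le_m r (hrow c 1 r le_rfl hc h), hc, le_g c r h⟩
    · rintro ⟨h1, hrm, hc, hcg⟩
      have hg : 0 < g r := le_g 1 r (S_one r h1 hrm)
      exact hrow _ c r hc hcg (Nat.findGreatest_of_ne_zero rfl hg.ne')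
  refine ⟨(List.range' 1 m).map g, ?_, ?_⟩
  · simp only [IsComposition, List.mem_map, List.mem_range'_1]
    rintro _ ⟨r, ⟨h1, hrm⟩, rfl⟩
    exact le_g 1 r (S_one r h1 (by omega))
  · rintro ⟨c, r⟩
    rw [S_iff]
    simp only [InCompDiag, List.length_map, List.length_range']
    refine and_congr_right fun h1 => ?_
    refine and_congr_right fun hrm => ?_
    have hlen : r - 1 < ((List.range' 1 m).map g).length := by
      simp only [List.length_map, List.length_range']; omega
    rw [List.getD_eq_getElem _ _ hlen, List.getElem_map, List.getElem_range', Nat.one_mul,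
      Nat.add_sub_cancel' h1]

theorem IsSYCT.lt_of_columnIncreasing_two {α : List ℕ} {n : ℕ} {T : ℕ × ℕ → ℕ}
    (hT : IsSYCT α n T) (h2 : ColumnIncreasing α T 2) {r r' : ℕ} (hrr' : r < r')
    (hd2 : InCompDiag α (2, r)) (hd1 : InCompDiag α (1, r')) : T (2, r) < T (1, r') := by
  have hne : T (2, r) ≠ T (1, r') := fun h => by
    simpa using hT.1.2.2 _ _ hd2 hd1 h
  by_contra! hle
  -- the triple condition on the boxes (1, r'), (2, r) forces (2, r') to exist with a smaller entry
  obtain ⟨hd2', hlt⟩ := hT.2.2.2 1 r' r hrr' hd1 hd2 (lt_of_le_of_ne hle hne.symm)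
  exact (h2 r r' hrr' hd2 hd2').asymm hlt

theorem exists_isComposition_prefix_diagram {α : List ℕ} {T : ℕ × ℕ → ℕ}
    (hα : IsComposition α)
    (hrow : RowIncreasing α T)
    (hcol : ColumnIncreasing α T 1) (k : ℕ) :
    ∃ β, IsComposition β ∧ ∀ b, InCompDiag α b ∧ T b ≤ k ↔ InCompDiag β b := by
  refine exists_isComposition_inCompDiag_iff (fun _ h => h.1) ?_ ?_
  · rintro c c' r hc' hcc' ⟨hd, hk⟩
    have hd' : InCompDiag α (c', r) := ⟨hd.1, hd.2.1, hc', hcc'.trans hd.2.2.2⟩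
    rcases hcc'.lt_or_eq with hlt | rfl
    · exact ⟨hd', (hrow c' c r hlt hd' hd).le.trans hk⟩
    · exact ⟨hd', hk⟩
  · rintro r r' h1 hrr' ⟨hd, hk⟩
    have hd1 : InCompDiag α (1, r) := hα.inCompDiag_one h1 (hrr'.trans hd.2.1)
    rcases hrr'.lt_or_eq with hlt | rfl
    · exact ⟨hd1, (hcol r r' hlt hd1 hd).le.trans hk⟩
    · exact ⟨hd1, hk⟩

theorem PrefixesArePeak.columnIncreasing_two {α : List ℕ} {n : ℕ} {T : ℕ × ℕ → ℕ}
    (hP : PrefixesArePeak α n T) (hrange : ∀ b, InCompDiag α b → 1 ≤ T b ∧ T b ≤ n)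
    (hrow : RowIncreasing α T) :
    ColumnIncreasing α T 2 := by
  intro r r' hrr' hd2 hd2'
  have hd1' : InCompDiag α (1, r') :=
    ⟨hd2'.1, hd2'.2.1, le_rfl, one_le_two.trans hd2'.2.2.2⟩
  obtain ⟨β, hβ, hβiff⟩ := hP _ (hrange _ hd1').1 (hrange _ hd1').2
  have hd2β : InCompDiag β (2, r) :=
    hβ.inCompDiag_two hd2.1 hrr' ((hβiff _).1 ⟨hd1', le_rfl⟩)
  exact ((hβiff _).2 hd2β).2.trans_lt (hrow 1 2 r' one_lt_two hd1' hd2')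

theorem spyct_iff_second_column_increasing_general (n : ℕ) (α : List ℕ)
    (hα : IsPeakComposition α)
    (T : ℕ × ℕ → ℕ) (hT : IsSYCT α n T) :
    PrefixesArePeak α n T ↔
      ∀ r r', r < r' → InCompDiag α (2, r) → InCompDiag α (2, r') →
        T (2, r) < T (2, r') := by
  refine ⟨fun hP => hP.columnIncreasing_two hT.1.1 hT.2.1, fun h2 k _ _ => ?_⟩
  obtain ⟨β, hβ, hβiff⟩ := exists_isComposition_prefix_diagram hα.1 hT.2.1 hT.2.2.1 k
  refine ⟨β, hβ.isPeakComposition fun r h1 => ?_, hβiff⟩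
  obtain ⟨hd1, hk⟩ := (hβiff _).2 h1
  have hd2 := hα.inCompDiag_two (Nat.le_add_left 1 r) (Nat.lt_succ_self _) hd1
  exact (hβiff _).1
    ⟨hd2, (hT.lt_of_columnIncreasing_two h2 (Nat.lt_succ_self _) hd2 hd1).le.trans hk⟩

/-- For a peak composition α and a standard Young composition tableau T of shape α:
every entry-prefix of T is a peak composition diagram iff the second column of T
increases bottom to top. -/
theorem spyct_iff_second_column_increasing (n : ℕ) (α : List ℕ)
    (hα : IsPeakComposition α) (hsum : α.sum = n)
    (T : ℕ × ℕ → ℕ) (hT : IsSYCT α n T) :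
    PrefixesArePeak α n T ↔
      ∀ r r', r < r' → InCompDiag α (2, r) → InCompDiag α (2, r') →
        T (2, r) < T (2, r') :=
  spyct_iff_second_column_increasing_general n α hα T hT
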